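/- arXiv:2411.07978 — 2 statements merged into one kernel-verified Lean document; each statement's English description precedes it below -/
import Mathlib

section
/- Sharp RD identification at the cutoff: Let m1, m0 : ℝ → ℝ be continuous functions such that m1(W) is a version of the conditional expectation E[Y(1) | σ(W)] P-almost surely and m0(W) is a version of E[Y(0) | σ(W)] P-almost surely. Define the observed regression function m : ℝ → ℝ by m(w) = m1(w) if w ≥ c and m(w) = m0(w) if w < c. Then (i) m(W) is a version of E[Y | σ(W)] P-almost surely, and (ii) m(w) tends to m1(c) as w → c from the right and m(w) tends to m0(c) as w → c from the left; consequently the conditional average treatment effect at the cutoff, τ0 := m1(c) − m0(c), equals the jump of the observed regression function at the cutoff: τ0 = lim_{w↓c} m(w) − lim_{w↑c} m(w). -/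
open MeasureTheory Filter Topology

/-- **Sharp RD identification at the cutoff.**
Setup: `(Ω, ℱ, P)` probability space, `W` measurable running variable, `c` cutoff,
`D = 1{W ≥ c}`, potential outcomes `Y1, Y0` integrable, observed outcome
`Y = D⬝Y1 + (1 − D)⬝Y0`.  If `m1, m0` are continuous functions with
`m1 ∘ W` a version of `E[Y1 | σ(W)]` and `m0 ∘ W` a version of `E[Y0 | σ(W)]`, and the
observed regression function is `m w = m1 w` for `w ≥ c`, `m w = m0 w` for `w < c`, then
(i) `m ∘ W` is a version of `E[Y | σ(W)]`, (ii) `m` tends to `m1 c` from the right and to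
`m0 c` from the left at the cutoff, and consequently `τ0 = m1 c − m0 c` equals the jump
of `m` at the cutoff. -/
theorem sharp_rd_identification
    {Ω : Type*} [MeasurableSpace Ω] (P : Measure Ω) [IsProbabilityMeasure P]
    (W : Ω → ℝ) (hW : Measurable W) (c : ℝ)
    (Y1 Y0 : Ω → ℝ) (hY1 : Integrable Y1 P) (hY0 : Integrable Y0 P)
    (D : Ω → ℝ) (hD : D = fun ω => if c ≤ W ω then (1 : ℝ) else 0)
    (Y : Ω → ℝ) (hY : Y = fun ω => D ω * Y1 ω + (1 - D ω) * Y0 ω)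
    (m1 m0 : ℝ → ℝ) (hm1cont : Continuous m1) (hm0cont : Continuous m0)
    (hm1 : (fun ω => m1 (W ω)) =ᵐ[P] P[Y1 | MeasurableSpace.comap W inferInstance])
    (hm0 : (fun ω => m0 (W ω)) =ᵐ[P] P[Y0 | MeasurableSpace.comap W inferInstance])
    (m : ℝ → ℝ) (hm : m = fun w => if c ≤ w then m1 w else m0 w) :
    (fun ω => m (W ω)) =ᵐ[P] P[Y | MeasurableSpace.comap W inferInstance]
    ∧ Tendsto m (𝓝[>] c) (𝓝 (m1 c))
    ∧ Tendsto m (𝓝[<] c) (𝓝 (m0 c))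
    ∧ ∀ L1 L0 : ℝ, Tendsto m (𝓝[>] c) (𝓝 L1) → Tendsto m (𝓝[<] c) (𝓝 L0) →
        m1 c - m0 c = L1 - L0 := by
  set mW := MeasurableSpace.comap W inferInstance with hmW
  -- right limit
  have hright : Tendsto m (𝓝[>] c) (𝓝 (m1 c)) := by
    have : Tendsto m1 (𝓝[>] c) (𝓝 (m1 c)) := (hm1cont.tendsto c).mono_left nhdsWithin_le_nhds
    refine this.congr' ?_
    filter_upwards [self_mem_nhdsWithin] with w hw
    simp [hm, le_of_lt (Set.mem_Ioi.mp hw)]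
  have hleft : Tendsto m (𝓝[<] c) (𝓝 (m0 c)) := by
    have : Tendsto m0 (𝓝[<] c) (𝓝 (m0 c)) := (hm0cont.tendsto c).mono_left nhdsWithin_le_nhds
    refine this.congr' ?_
    filter_upwards [self_mem_nhdsWithin] with w hw
    simp [hm, not_le.mpr (Set.mem_Iio.mp hw)]
  refine ⟨?_, hright, hleft, ?_⟩
  · -- conditional expectation part
    have hWm : Measurable[mW] W := fun s hs => ⟨s, hs, rfl⟩
    set d : ℝ → ℝ := fun w => if c ≤ w then (1:ℝ) else 0 with hd'
    have hdmeas : Measurable d := Measurable.ite measurableSet_Ici measurable_const measurable_const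
    have hdW : StronglyMeasurable[mW] (fun ω => d (W ω)) :=
      ((hdmeas.comp hWm)).stronglyMeasurable
    have heW : StronglyMeasurable[mW] (fun ω => 1 - d (W ω)) :=
      stronglyMeasurable_const.sub hdW
    have hdbd : ∀ ω, ‖d (W ω)‖ ≤ 1 := by
      intro ω; by_cases h : c ≤ W ω <;> simp [d, h]
    have hebd : ∀ ω, ‖1 - d (W ω)‖ ≤ 1 := by
      intro ω; by_cases h : c ≤ W ω <;> simp [d, h]
    have hint1 : Integrable (fun ω => d (W ω) * Y1 ω) P :=
      hY1.bdd_mul (hdW.mono hW.comap_le).aestronglyMeasurable (Eventually.of_forall hdbd)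
    have hint0 : Integrable (fun ω => (1 - d (W ω)) * Y0 ω) P :=
      hY0.bdd_mul (heW.mono hW.comap_le).aestronglyMeasurable (Eventually.of_forall hebd)
    have h1 : P[(fun ω => d (W ω)) * Y1 | mW] =ᵐ[P] (fun ω => d (W ω)) * P[Y1 | mW] :=
      condExp_mul_of_stronglyMeasurable_left hdW hint1 hY1
    have h0 : P[(fun ω => 1 - d (W ω)) * Y0 | mW] =ᵐ[P]
        (fun ω => 1 - d (W ω)) * P[Y0 | mW] :=
      condExp_mul_of_stronglyMeasurable_left heW hint0 hY0
    have hYeq : Y = (fun ω => d (W ω)) * Y1 + (fun ω => 1 - d (W ω)) * Y0 := by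
      funext ω; simp [hY, hD, d]
    have hadd : P[Y | mW] =ᵐ[P]
        P[(fun ω => d (W ω)) * Y1 | mW] + P[(fun ω => 1 - d (W ω)) * Y0 | mW] := by
      rw [hYeq]; exact condExp_add hint1 hint0 _
    filter_upwards [hadd, h1, h0, hm1, hm0] with ω ha h1' h0' hx1 hx0
    have : m (W ω) = d (W ω) * m1 (W ω) + (1 - d (W ω)) * m0 (W ω) := by
      by_cases h : c ≤ W ω <;> simp [hm, d, h]
    rw [this, ha]
    simp only [Pi.add_apply, Pi.mul_apply] at h1' h0' ⊢
    rw [h1', h0', ← hx1, ← hx0]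
  · intro L1 L0 h1 h0
    have e1 : L1 = m1 c := tendsto_nhds_unique h1 hright
    have e0 : L0 = m0 c := tendsto_nhds_unique h0 hleft
    rw [e1, e0]
end

section
/- Bias-correction identity at the cutoff for a possibly misspecified outcome model: Let κ := condDistrib Z W P be the regular conditional distribution of Z given W. Let μ0 : ℝ × ℝ^k → ℝ be bounded measurable with μ0(W, Z) = E[Y | σ(W, Z)] P-almost surely, let m : ℝ → ℝ be a continuous function with m(W) = E[Y | σ(W)] P-almost surely, suppose the map w ↦ ∫ μ0(w, z) dκ(w)(z) is continuous, and suppose c lies in the topological support of the law of W. Then for every bounded measurable μ† : ℝ × ℝ^k → ℝ, ∫ (μ0(c, z) − μ†(c, z)) dκ(c)(z) + ∫ μ†(c, z) dκ(c)(z) = m(c); that is, the conditional expected estimation error E[μ0(W, Z) − μ†(W, Z) | W = c] plus the conditional mean of the misspecified outcome model at the cutoff recovers E[Y | W = c]. -/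
open MeasureTheory ProbabilityTheory Filter Topology

/-! By the tower property, `w ↦ ∫ μ0(w, z) dκ(w)(z)` evaluated at `W` is a version of
`E[Y | W]`, so it agrees with `m` almost everywhere for the law of `W`. Both functions are
continuous, so the closed set where they agree has full measure and therefore contains the support
of that law, hence `c`. Subtracting and adding back `μ†` changes nothing because both slices at `c`
are bounded, hence integrable. -/

theorem Continuous.eq_of_comp_ae_eq_of_mem_measureSupport
    {Ω α β : Type*} [MeasurableSpace Ω] {μ : Measure Ω}
    [TopologicalSpace α] [MeasurableSpace α] [OpensMeasurableSpace α]
    [TopologicalSpace β] [T2Space β] {X : Ω → α} {f g : α → β}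
    (hf : Continuous f) (hg : Continuous g) (hX : AEMeasurable X μ)
    (hfg : (fun ω => f (X ω)) =ᵐ[μ] fun ω => g (X ω)) {c : α} (hc : c ∈ (μ.map X).support) :
    f c = g c := by
  have hclosed : IsClosed {x | f x = g x} := isClosed_eq hf hg
  exact Measure.support_subset_of_isClosed hclosed
    ((ae_map_iff hX hclosed.measurableSet).2 hfg) hc

theorem integral_condDistrib_ae_eq_condExp
    {Ω α β F : Type*} [MeasurableSpace Ω] {μ : Measure Ω} [IsFiniteMeasure μ]
    [MeasurableSpace α] [MeasurableSpace β] [StandardBorelSpace β] [Nonempty β]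
    [NormedAddCommGroup F] [NormedSpace ℝ F] [CompleteSpace F]
    {X : Ω → α} {Y : Ω → β} {V : Ω → F} {f : α × β → F}
    (hX : Measurable X) (hY : Measurable Y) (hf_int : Integrable f (μ.map fun ω => (X ω, Y ω)))
    (hf : (fun ω => f (X ω, Y ω))
      =ᵐ[μ] μ[V | MeasurableSpace.comap (fun ω => (X ω, Y ω)) inferInstance]) :
    (fun ω => ∫ y, f (X ω, y) ∂condDistrib Y X μ (X ω))
      =ᵐ[μ] μ[V | MeasurableSpace.comap X inferInstance] := by
  have hle : MeasurableSpace.comap X inferInstance ≤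
      MeasurableSpace.comap (fun ω => (X ω, Y ω)) inferInstance :=
    MeasurableSpace.comap_le_comap_of_eq_comp Prod.fst measurable_fst rfl
  calc (fun ω => ∫ y, f (X ω, y) ∂condDistrib Y X μ (X ω))
      =ᵐ[μ] μ[fun ω => f (X ω, Y ω) | MeasurableSpace.comap X inferInstance] :=
        (condExp_prod_ae_eq_integral_condDistrib' hX hY.aemeasurable hf_int).symm
    _ =ᵐ[μ] μ[μ[V | MeasurableSpace.comap (fun ω => (X ω, Y ω)) inferInstance]
          | MeasurableSpace.comap X inferInstance] := condExp_congr_ae hf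
    _ =ᵐ[μ] μ[V | MeasurableSpace.comap X inferInstance] :=
        condExp_condExp_of_le hle (hX.prodMk hY).comap_le

theorem dr_rd_bias_correction_identity_general
    {Ω : Type*} [MeasurableSpace Ω] (P : Measure Ω) [IsProbabilityMeasure P]
    {k : ℕ} (W : Ω → ℝ) (hW : Measurable W) (Z : Ω → (Fin k → ℝ)) (hZ : Measurable Z)
    (c : ℝ) (Y : Ω → ℝ)
    (μ0 : ℝ × (Fin k → ℝ) → ℝ) (hμ0meas : Measurable μ0) (C0 : ℝ) (hμ0bdd : ∀ p, |μ0 p| ≤ C0)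
    (hμ0 : (fun ω => μ0 (W ω, Z ω))
      =ᵐ[P] P[Y | MeasurableSpace.comap (fun ω => (W ω, Z ω)) inferInstance])
    (m : ℝ → ℝ) (hmcont : Continuous m)
    (hm : (fun ω => m (W ω)) =ᵐ[P] P[Y | MeasurableSpace.comap W inferInstance])
    (hcont : Continuous fun w => ∫ z, μ0 (w, z) ∂(condDistrib Z W P w))
    (hsupp : ∀ U ∈ 𝓝 c, P.map W U ≠ 0)
    (μdag : ℝ × (Fin k → ℝ) → ℝ) (hμdagmeas : Measurable μdag)
    (Cdag : ℝ) (hμdagbdd : ∀ p, |μdag p| ≤ Cdag) :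
    (∫ z, (μ0 (c, z) - μdag (c, z)) ∂(condDistrib Z W P c))
      + (∫ z, μdag (c, z) ∂(condDistrib Z W P c)) = m c := by
  have hint0 : Integrable (fun z => μ0 (c, z)) (condDistrib Z W P c) :=
    .of_bound (hμ0meas.comp measurable_prodMk_left).aestronglyMeasurable C0
      (.of_forall fun z => hμ0bdd (c, z))
  have hintdag : Integrable (fun z => μdag (c, z)) (condDistrib Z W P c) :=
    .of_bound (hμdagmeas.comp measurable_prodMk_left).aestronglyMeasurable Cdag
      (.of_forall fun z => hμdagbdd (c, z))
  rw [integral_sub hint0 hintdag, sub_add_cancel]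
  have hregression :
      (fun ω => ∫ z, μ0 (W ω, z) ∂condDistrib Z W P (W ω)) =ᵐ[P] fun ω => m (W ω) :=
    (integral_condDistrib_ae_eq_condExp hW hZ
      (.of_bound hμ0meas.aestronglyMeasurable C0 (.of_forall hμ0bdd)) hμ0).trans hm.symm
  have hc : c ∈ (P.map W).support :=
    (Measure.mem_support_iff_forall c).2 fun U hU => pos_iff_ne_zero.2 (hsupp U hU)
  exact hcont.eq_of_comp_ae_eq_of_mem_measureSupport hmcont hW.aemeasurable hregression hc

/-- **Bias-correction identity at the cutoff for a possibly misspecified outcome model.**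
Setup: `(Ω, ℱ, P)` probability space, running variable `W : Ω → ℝ`, covariates
`Z : Ω → ℝ^k`, cutoff `c`, bounded measurable observed outcome `Y`.  Let
`κ := condDistrib Z W P` be the regular conditional distribution of `Z` given `W`.
If `μ0` is bounded measurable with `μ0(W, Z) = E[Y | σ(W, Z)]` a.s., `m` is continuous
with `m(W) = E[Y | σ(W)]` a.s., the map `w ↦ ∫ μ0(w, z) dκ(w)(z)` is continuous, and `c`
lies in the topological support of the law of `W` (every neighborhood of `c` has positive
measure under `P.map W`), then for every bounded measurable `μ†`,
`∫ (μ0(c,z) − μ†(c,z)) dκ(c)(z) + ∫ μ†(c,z) dκ(c)(z) = m(c)`. -/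
theorem dr_rd_bias_correction_identity
    {Ω : Type*} [MeasurableSpace Ω] (P : Measure Ω) [IsProbabilityMeasure P]
    {k : ℕ} (W : Ω → ℝ) (hW : Measurable W) (Z : Ω → (Fin k → ℝ)) (hZ : Measurable Z)
    (c : ℝ) (Y : Ω → ℝ) (hYmeas : Measurable Y) (CY : ℝ) (hYbdd : ∀ ω, |Y ω| ≤ CY)
    (μ0 : ℝ × (Fin k → ℝ) → ℝ) (hμ0meas : Measurable μ0) (C0 : ℝ) (hμ0bdd : ∀ p, |μ0 p| ≤ C0)
    (hμ0 : (fun ω => μ0 (W ω, Z ω))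
      =ᵐ[P] P[Y | MeasurableSpace.comap (fun ω => (W ω, Z ω)) inferInstance])
    (m : ℝ → ℝ) (hmcont : Continuous m)
    (hm : (fun ω => m (W ω)) =ᵐ[P] P[Y | MeasurableSpace.comap W inferInstance])
    (hcont : Continuous fun w => ∫ z, μ0 (w, z) ∂(condDistrib Z W P w))
    (hsupp : ∀ U ∈ 𝓝 c, P.map W U ≠ 0)
    (μdag : ℝ × (Fin k → ℝ) → ℝ) (hμdagmeas : Measurable μdag)
    (Cdag : ℝ) (hμdagbdd : ∀ p, |μdag p| ≤ Cdag) :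
    (∫ z, (μ0 (c, z) - μdag (c, z)) ∂(condDistrib Z W P c))
      + (∫ z, μdag (c, z) ∂(condDistrib Z W P c)) = m c :=
  dr_rd_bias_correction_identity_general P W hW Z hZ c Y μ0 hμ0meas C0 hμ0bdd hμ0 m hmcont hm hcont
    hsupp μdag hμdagmeas Cdag hμdagbdd
end
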